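/- arXiv:1406.7484 — 2 statements merged into one kernel-verified Lean document; each statement's English description precedes it below -/
import Mathlib

section
/- Let A be a commutative ring and M_{k+1} ⊆ A ⊗_ℝ A be the submodule spanned by elements δ^{a_0}⋯δ^{a_k}(x) for x ∈ A ⊗_ℝ A and a_i ∈ A, where δ^b(a ⊗ c) = (ba) ⊗ c − a ⊗ (bc). Then M_{k+1} is an ideal of the ring A ⊗_ℝ A with multiplication (a⊗b)(a'⊗b') = (aa')⊗(bb'). In particular the k-th jet module Jetᵏ(A) = (A ⊗_ℝ A)/M_{k+1} is a ring and the jet map jetᵏ(a) = 1 ⊗ a + M_{k+1} is multiplicative: jetᵏ(ab) = jetᵏ(a)·jetᵏ(b). -/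
open scoped TensorProduct

/-!
STATEMENT 3: The submodule `M_{k+1} ⊆ A ⊗_ℝ A` spanned (over `A`, acting on the first
tensor factor) by the elements `δ^{a_0} ⋯ δ^{a_k}(x)` is an ideal of the ring `A ⊗_ℝ A`;
consequently `Jetᵏ(A) = (A ⊗_ℝ A)/M_{k+1}` is a ring and
`jetᵏ(ab) = jetᵏ(a)·jetᵏ(b)` where `jetᵏ(a) = 1 ⊗ a + M_{k+1}`.
-/

noncomputable section

/-- `δ^b (a ⊗ c) = (ba) ⊗ c − a ⊗ (bc)`, i.e. left multiplication by `b ⊗ 1 − 1 ⊗ b`. -/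
def deltaTensor {A : Type*} [CommRing A] [Algebra ℝ A] (b : A) :
    (A ⊗[ℝ] A) →ₗ[ℝ] (A ⊗[ℝ] A) :=
  LinearMap.mulLeft ℝ (b ⊗ₜ (1 : A) - (1 : A) ⊗ₜ b)

/-- The `A`-submodule `M_{k+1}` spanned by all `δ^{a_0} ⋯ δ^{a_k}(x)`. -/
def jetSubmodule (A : Type*) [CommRing A] [Algebra ℝ A] (k : ℕ) :
    Submodule A (A ⊗[ℝ] A) :=
  Submodule.span A
    {x : A ⊗[ℝ] A | ∃ (l : List A) (y : A ⊗[ℝ] A),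
      l.length = k + 1 ∧ l.foldr (fun b z => deltaTensor b z) y = x}

theorem jetSubmodule_isIdeal_and_jet_multiplicative
    (A : Type*) [CommRing A] [Algebra ℝ A] (k : ℕ) :
    ∃ I : Ideal (A ⊗[ℝ] A),
      (I : Set (A ⊗[ℝ] A)) = (jetSubmodule A k : Set (A ⊗[ℝ] A)) ∧
      ∀ a b : A,
        Ideal.Quotient.mk I ((1 : A) ⊗ₜ[ℝ] (a * b)) =
          Ideal.Quotient.mk I ((1 : A) ⊗ₜ[ℝ] a) * Ideal.Quotient.mk I ((1 : A) ⊗ₜ[ℝ] b) := by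
  classical
  set S : Set (A ⊗[ℝ] A) :=
    {x : A ⊗[ℝ] A | ∃ (l : List A) (y : A ⊗[ℝ] A),
      l.length = k + 1 ∧ l.foldr (fun b z => deltaTensor b z) y = x} with hS
  have hfold : ∀ (l : List A) (t y : A ⊗[ℝ] A),
      l.foldr (fun b z => deltaTensor b z) (t * y)
        = t * l.foldr (fun b z => deltaTensor b z) y := by
    intro l t y
    induction l with
    | nil => rfl
    | cons b l ih =>
        rw [List.foldr_cons, List.foldr_cons, ih]
        simp only [deltaTensor, LinearMap.mulLeft_apply]
        ring
  have hmulS : ∀ t x, x ∈ S → t * x ∈ S := by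
    rintro t x ⟨l, y, hl, rfl⟩
    exact ⟨l, t * y, hl, hfold l t y⟩
  have hjet : jetSubmodule A k = Submodule.span A S := rfl
  have hmul : ∀ t x, x ∈ jetSubmodule A k → t * x ∈ jetSubmodule A k := by
    intro t x hx
    rw [hjet] at hx ⊢
    refine Submodule.span_induction (p := fun x _ => t * x ∈ Submodule.span A S)
      ?_ ?_ ?_ ?_ hx
    · intro x hx; exact Submodule.subset_span (hmulS t x hx)
    · simp
    · intro x y _ _ hx hy; simpa [mul_add] using add_mem hx hy
    · intro a x _ hx; simpa [mul_smul_comm] using Submodule.smul_mem _ a hx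
  refine ⟨Ideal.span S, ?_, ?_⟩
  · apply Set.Subset.antisymm
    · intro x hx
      refine Submodule.span_induction (p := fun x _ => x ∈ jetSubmodule A k)
        ?_ ?_ ?_ ?_ hx
      · exact fun x hx => Submodule.subset_span hx
      · simp
      · intro x y _ _ hx hy; exact add_mem hx hy
      · intro t x _ hx; simpa [smul_eq_mul] using hmul t x hx
    · intro x hx
      rw [hjet] at hx
      refine Submodule.span_induction (p := fun x _ => x ∈ Ideal.span S)
        ?_ ?_ ?_ ?_ hx
      · exact fun x hx => Ideal.subset_span hx
      · simp
      · intro x y _ _ hx hy; exact add_mem hx hy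
      · intro a x _ hx
        have : a • x = ((a : A) ⊗ₜ[ℝ] (1 : A)) * x := by
          rw [Algebra.smul_def]
          rfl
        rw [this]
        exact Ideal.mul_mem_left _ _ hx
  · intro a b
    rw [← map_mul]
    congr 1
    rw [Algebra.TensorProduct.tmul_mul_tmul, one_mul]
end
end

section
/- Let A → M be a real algebra bundle equipped with a connection ∇ compatible with the multiplication (Leibniz rule), let M carry a torsion-free connection, and let Sᵏ : Jetᵏ(A) → Sym^{≤k} T*M ⊗ A be the map Sᵏ(jetᵏ_x σ) = Σ_{m=0}^{k} (1/m!) (Dᵐσ)(x), where D is the symmetrized covariant derivative. Then Sᵏ is an isomorphism of algebra bundles, where Sym^{≤k} T*M ⊗ A carries the truncated product (σ₁⊗a₁)·_k(σ₂⊗a₂) = pr^{≤k}(σ₁σ₂) ⊗ (a₁a₂). In particular Sᵏ(στ) = Sᵏ(σ) ·_k Sᵏ(τ) for sections σ, τ of A. -/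
/-- Iterated Leibniz rule for a derivation. -/
lemma iterate_leibniz {R : Type*} [CommRing R] [Algebra ℚ R]
    (D : R →ₗ[ℚ] R) (hLeib : ∀ x y : R, D (x * y) = D x * y + x * D y)
    (x y : R) (l : ℕ) :
    (⇑D)^[l] (x * y) =
      ∑ i ∈ Finset.range (l + 1), (l.choose i : ℚ) • ((⇑D)^[i] x * (⇑D)^[l - i] y) := by
  induction l with
  | zero => simp
  | succ n ih =>
    rw [Function.iterate_succ_apply', ih, map_sum]
    have step : ∀ i ∈ Finset.range (n + 1),
        D ((n.choose i : ℚ) • ((⇑D)^[i] x * (⇑D)^[n - i] y)) =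
        (n.choose i : ℚ) • ((⇑D)^[i + 1] x * (⇑D)^[n - i] y)
          + (n.choose i : ℚ) • ((⇑D)^[i] x * (⇑D)^[(n - i) + 1] y) := by
      intro i _
      rw [map_smul, hLeib, smul_add, Function.iterate_succ_apply', Function.iterate_succ_apply']
    rw [Finset.sum_congr rfl step, Finset.sum_add_distrib]
    have h1 : ∑ i ∈ Finset.range (n + 1),
        (n.choose i : ℚ) • ((⇑D)^[i + 1] x * (⇑D)^[n - i] y)
        = ∑ j ∈ Finset.range (n + 2),
          (((n + 1).choose j : ℚ) - (n.choose j : ℚ)) • ((⇑D)^[j] x * (⇑D)^[n + 1 - j] y) := by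
      rw [Finset.sum_range_succ'
        (fun j => (((n + 1).choose j : ℚ) - (n.choose j : ℚ)) • ((⇑D)^[j] x * (⇑D)^[n + 1 - j] y))]
      simp only [Nat.choose_zero_right, Nat.cast_one, sub_self, zero_smul, add_zero]
      apply Finset.sum_congr rfl
      intro i _
      have : ((n + 1).choose (i + 1) : ℚ) - (n.choose (i + 1) : ℚ) = (n.choose i : ℚ) := by
        rw [Nat.choose_succ_succ]
        push_cast
        ring
      have h' : n + 1 - (i + 1) = n - i := by omega
      rw [this, h']
    have h2 : ∑ i ∈ Finset.range (n + 1),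
        (n.choose i : ℚ) • ((⇑D)^[i] x * (⇑D)^[(n - i) + 1] y)
        = ∑ j ∈ Finset.range (n + 2),
          (n.choose j : ℚ) • ((⇑D)^[j] x * (⇑D)^[n + 1 - j] y) := by
      conv_rhs => rw [Finset.sum_range_succ]
      simp only [Nat.choose_succ_self, Nat.cast_zero, zero_smul, add_zero]
      apply Finset.sum_congr rfl
      intro i hi
      simp only [Finset.mem_range] at hi
      have h' : n + 1 - i = (n - i) + 1 := by omega
      rw [h']
    rw [h1, h2, ← Finset.sum_add_distrib]
    apply Finset.sum_congr rfl
    intro j _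
    rw [← add_smul, sub_add_cancel]

theorem truncated_taylor_multiplicative
    {R : Type*} [CommRing R] [Algebra ℚ R] (𝒜 : ℕ → Submodule ℚ R)
    (hmul : ∀ (a b : ℕ) (x y : R), x ∈ 𝒜 a → y ∈ 𝒜 b → x * y ∈ 𝒜 (a + b))
    (D : R →ₗ[ℚ] R)
    (hD : ∀ (m : ℕ) (x : R), x ∈ 𝒜 m → D x ∈ 𝒜 (m + 1))
    (hLeib : ∀ x y : R, D (x * y) = D x * y + x * D y)
    (k : ℕ) (σ τ : R) (hσ : σ ∈ 𝒜 0) (hτ : τ ∈ 𝒜 0)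
    (I : Ideal R) (hI : I = Ideal.span {x : R | ∃ m : ℕ, k < m ∧ x ∈ 𝒜 m}) :
    Ideal.Quotient.mk I (∑ l ∈ Finset.range (k + 1),
        ((l.factorial : ℚ)⁻¹) • ((⇑D)^[l] (σ * τ))) =
      Ideal.Quotient.mk I (∑ l ∈ Finset.range (k + 1),
        ((l.factorial : ℚ)⁻¹) • ((⇑D)^[l] σ)) *
      Ideal.Quotient.mk I (∑ l ∈ Finset.range (k + 1),
        ((l.factorial : ℚ)⁻¹) • ((⇑D)^[l] τ)) := by
  have hDσ : ∀ i : ℕ, (⇑D)^[i] σ ∈ 𝒜 i := by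
    intro i
    induction i with
    | zero => simpa using hσ
    | succ n ih => rw [Function.iterate_succ_apply']; exact hD n _ ih
  have hDτ : ∀ i : ℕ, (⇑D)^[i] τ ∈ 𝒜 i := by
    intro i
    induction i with
    | zero => simpa using hτ
    | succ n ih => rw [Function.iterate_succ_apply']; exact hD n _ ih
  set f : ℕ × ℕ → R := fun p =>
    ((p.1.factorial : ℚ)⁻¹ * (p.2.factorial : ℚ)⁻¹) • ((⇑D)^[p.1] σ * (⇑D)^[p.2] τ) with hf
  -- Left side as a sum over pairs with i + j ≤ k
  have hLHS : (∑ l ∈ Finset.range (k + 1), ((l.factorial : ℚ)⁻¹) • ((⇑D)^[l] (σ * τ)))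
      = ∑ p ∈ (Finset.range (k + 1) ×ˢ Finset.range (k + 1)).filter
          (fun p => p.1 + p.2 ≤ k), f p := by
    have hstep : ∀ l ∈ Finset.range (k + 1),
        ((l.factorial : ℚ)⁻¹) • ((⇑D)^[l] (σ * τ))
        = ∑ i ∈ Finset.range (l + 1), f (i, l - i) := by
      intro l _
      rw [iterate_leibniz D hLeib, Finset.smul_sum]
      apply Finset.sum_congr rfl
      intro i hi
      simp only [Finset.mem_range] at hi
      rw [hf, smul_smul]
      congr 1
      rw [Nat.choose_eq_factorial_div_factorial (by omega),
        Nat.cast_div_charZero (Nat.factorial_mul_factorial_dvd_factorial (by omega))]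
      push_cast
      have h1 : (l.factorial : ℚ) ≠ 0 := Nat.cast_ne_zero.mpr l.factorial_ne_zero
      have h2 : (i.factorial : ℚ) ≠ 0 := Nat.cast_ne_zero.mpr i.factorial_ne_zero
      have h3 : ((l - i).factorial : ℚ) ≠ 0 := Nat.cast_ne_zero.mpr (l - i).factorial_ne_zero
      field_simp
    rw [Finset.sum_congr rfl hstep, Finset.sum_sigma']
    apply Finset.sum_nbij' (i := fun p => ((p.2, p.1 - p.2) : ℕ × ℕ))
      (j := fun p => (⟨p.1 + p.2, p.1⟩ : Σ _ : ℕ, ℕ))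
    · intro a ha
      simp only [Finset.mem_sigma, Finset.mem_range] at ha
      simp only [Finset.mem_filter, Finset.mem_product, Finset.mem_range]
      omega
    · intro a ha
      simp only [Finset.mem_filter, Finset.mem_product, Finset.mem_range] at ha
      simp only [Finset.mem_sigma, Finset.mem_range]
      omega
    · intro a ha
      obtain ⟨l, i⟩ := a
      simp only [Finset.mem_sigma, Finset.mem_range] at ha
      have : i + (l - i) = l := by omega
      simp [this]
    · intro a ha
      obtain ⟨i, j⟩ := a
      simp only [Prod.mk.injEq]
      exact ⟨trivial, by omega⟩
    · intro a _
      rfl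
  -- Right side (before quotient) as the full square sum
  have hRHS : (∑ l ∈ Finset.range (k + 1), ((l.factorial : ℚ)⁻¹) • ((⇑D)^[l] σ)) *
      (∑ l ∈ Finset.range (k + 1), ((l.factorial : ℚ)⁻¹) • ((⇑D)^[l] τ))
      = ∑ p ∈ Finset.range (k + 1) ×ˢ Finset.range (k + 1), f p := by
    rw [Finset.sum_mul_sum, ← Finset.sum_product']
    apply Finset.sum_congr rfl
    intro p _
    rw [hf, smul_mul_smul_comm]
  rw [hLHS, ← map_mul, hRHS]
  -- The difference lies in the ideal
  have hsplit := Finset.sum_filter_add_sum_filter_not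
    (Finset.range (k + 1) ×ˢ Finset.range (k + 1)) (fun p => p.1 + p.2 ≤ k) f
  rw [← hsplit, map_add, left_eq_add]
  rw [Ideal.Quotient.eq_zero_iff_mem]
  apply Ideal.sum_mem
  intro p hp
  simp only [Finset.mem_filter, not_le] at hp
  have hmem : (⇑D)^[p.1] σ * (⇑D)^[p.2] τ ∈ 𝒜 (p.1 + p.2) :=
    hmul _ _ _ _ (hDσ p.1) (hDτ p.2)
  have hin : (⇑D)^[p.1] σ * (⇑D)^[p.2] τ ∈ I := by
    rw [hI]
    exact Ideal.subset_span ⟨p.1 + p.2, hp.2, hmem⟩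
  have := I.smul_mem (algebraMap ℚ R ((p.1.factorial : ℚ)⁻¹ * (p.2.factorial : ℚ)⁻¹)) hin
  rw [algebraMap_smul] at this
  simpa only [hf] using this
end
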